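/- If C is a minimal vertex cover of a simple hypergraph H of maximum cardinality, then there exists a semi-strongly disjoint set of bouquets B of H with F(B) = C and |F(B)| = d'_H. -/

import Mathlib

open Finset

structure SimpleHypergraph (α : Type*) [DecidableEq α] where
  edges : Finset (Finset α)
  nonempty_edges : ∀ E ∈ edges, E.Nonempty
  antichain : ∀ E ∈ edges, ∀ F ∈ edges, E ⊆ F → E = F

namespace SimpleHypergraph

variable {α : Type*} [DecidableEq α]

/-- The vertex set of a simple hypergraph: the union of its edges. -/
def verts (H : SimpleHypergraph α) : Finset α := H.edges.sup id

/-- `C` is a vertex cover: every edge meets `C`. -/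
def IsCover (H : SimpleHypergraph α) (C : Finset α) : Prop :=
  ∀ E ∈ H.edges, ∃ v ∈ E, v ∈ C

/-- `C` is a minimal vertex cover. -/
def IsMinCover (H : SimpleHypergraph α) (C : Finset α) : Prop :=
  H.IsCover C ∧ ∀ D ⊂ C, ¬ H.IsCover D

/-- `A` is independent: it contains no edge. -/
def Indep (H : SimpleHypergraph α) (A : Finset α) : Prop :=
  ∀ E ∈ H.edges, ¬ E ⊆ A

/-- The partial hypergraph of `H` on a vertex subset `U`. -/
def restrict (H : SimpleHypergraph α) (U : Finset α) : SimpleHypergraph α where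
  edges := H.edges.filter (· ⊆ U)
  nonempty_edges := fun E hE => H.nonempty_edges E (Finset.mem_filter.mp hE).1
  antichain := fun E hE F hF h =>
    H.antichain E (Finset.mem_filter.mp hE).1 F (Finset.mem_filter.mp hF).1 h

/-- The maximum cardinality of a minimal vertex cover (big height). -/
noncomputable def alpha0' (H : SimpleHypergraph α) : ℕ :=
  sSup {n : ℕ | ∃ C : Finset α, H.IsMinCover C ∧ n = C.card}

/-- A bouquet of `H`: a partial hypergraph whose edges have a common vertex,
with a designated flower in each edge belonging to no other edge. -/
structure BouquetOf (H : SimpleHypergraph α) where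
  edges : Finset (Finset α)
  edges_nonempty : edges.Nonempty
  subset : edges ⊆ H.edges
  core : ∃ v, ∀ E ∈ edges, v ∈ E
  flower : Finset α → α
  flower_spec : ∀ E ∈ edges, ∀ F ∈ edges, (flower E ∈ F ↔ E = F)

def BouquetOf.flowers {H : SimpleHypergraph α} (B : H.BouquetOf) : Finset α :=
  B.edges.image B.flower

def BouquetOf.verts {H : SimpleHypergraph α} (B : H.BouquetOf) : Finset α :=
  B.edges.sup id

/-- The union of the edge sets of a finite family of bouquets. -/
def famEdges {H : SimpleHypergraph α} {j : ℕ} (B : Fin j → H.BouquetOf) :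
    Finset (Finset α) := Finset.univ.sup fun i => (B i).edges

/-- The union of the flower sets of a finite family of bouquets. -/
def famFlowers {H : SimpleHypergraph α} {j : ℕ} (B : Fin j → H.BouquetOf) :
    Finset α := Finset.univ.sup fun i => (B i).flowers

/-- The union of the vertex sets of a finite family of bouquets. -/
def famVerts {H : SimpleHypergraph α} {j : ℕ} (B : Fin j → H.BouquetOf) :
    Finset α := Finset.univ.sup fun i => (B i).verts

/-- A semi-strongly disjoint family of bouquets of `H`. -/
def SSD (H : SimpleHypergraph α) {j : ℕ} (B : Fin j → H.BouquetOf) : Prop :=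
  (∀ p q : Fin j, p ≠ q → ∀ E ∈ (B p).edges, ∀ f ∈ (B q).flowers, f ∉ E) ∧
  H.Indep (famVerts B \ famFlowers B)

/-- `d'_H`: the maximum of `|E(𝓑)|` over semi-strongly disjoint sets of bouquets. -/
noncomputable def dPrime (H : SimpleHypergraph α) : ℕ :=
  sSup {n : ℕ | ∃ (j : ℕ) (B : Fin j → H.BouquetOf), H.SSD B ∧ n = (famEdges B).card}

end SimpleHypergraph

/-!
Every vertex `v` of a minimal cover `C` has a private edge `E_v` with `E_v ∩ C = {v}`; the
one-edge bouquets `{E_v}` with flower `v` form a semi-strongly disjoint family with flower set `C`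
and `|C|` edges, so `|C| ≤ d'_H`.  Conversely, in a semi-strongly disjoint family every flower lies
in exactly one edge of the family, so `|E(𝓑)| ≤ |F(𝓑)|`; and `F(𝓑)`, together with the vertices
outside `V(𝓑)`, is a cover in which every minimal subcover must keep all flowers, so
`|F(𝓑)| ≤ α₀'(H)`.  When `|C| = α₀'(H)` both bounds meet.
-/

namespace SimpleHypergraph

variable {α : Type*} [DecidableEq α] {H : SimpleHypergraph α}

theorem mem_verts {v : α} : v ∈ H.verts ↔ ∃ E ∈ H.edges, v ∈ E := by
  simp [verts]

section Covers

variable {C : Finset α}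

theorem IsCover.indep_sdiff (hC : H.IsCover C) (X : Finset α) : H.Indep (X \ C) := by
  intro E hE hsub
  obtain ⟨u, huE, huC⟩ := hC E hE
  exact (mem_sdiff.mp (hsub huE)).2 huC

theorem IsCover.exists_isMinCover_subset (hC : H.IsCover C) : ∃ D ⊆ C, H.IsMinCover D := by
  induction C using Finset.strongInductionOn with
  | _ C ih =>
    by_cases h : ∃ C' ⊂ C, H.IsCover C'
    · obtain ⟨C', hC'C, hC'⟩ := h
      obtain ⟨D, hDC', hD⟩ := ih C' hC'C hC'
      exact ⟨D, hDC'.trans hC'C.subset, hD⟩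
    · push Not at h
      exact ⟨C, Subset.refl C, hC, h⟩

theorem IsMinCover.exists_inter_eq_singleton (hC : H.IsMinCover C) {v : α} (hv : v ∈ C) :
    ∃ E ∈ H.edges, E ∩ C = {v} := by
  have hnc : ¬ H.IsCover (C.erase v) := hC.2 _ (erase_ssubset hv)
  simp only [IsCover, mem_erase, not_forall, not_exists, not_and] at hnc
  obtain ⟨E, hE, hEC⟩ := hnc
  have only_v : ∀ w ∈ E, w ∈ C → w = v := fun w hwE hwC => by
    by_contra hwv
    exact hEC w hwE hwv hwC
  obtain ⟨u, huE, huC⟩ := hC.1 E hE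
  refine ⟨E, hE, eq_singleton_iff_unique_mem.mpr ⟨?_, fun w hw => ?_⟩⟩
  · exact mem_inter.mpr ⟨only_v u huE huC ▸ huE, hv⟩
  · exact only_v w (mem_inter.mp hw).1 (mem_inter.mp hw).2

theorem IsMinCover.subset_verts (hC : H.IsMinCover C) : C ⊆ H.verts := by
  intro v hv
  obtain ⟨E, hE, hEC⟩ := hC.exists_inter_eq_singleton hv
  exact mem_verts.mpr ⟨E, hE, (mem_inter.mp (hEC ▸ mem_singleton_self v)).1⟩

theorem bddAbove_alpha0' (H : SimpleHypergraph α) :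
    BddAbove {n : ℕ | ∃ C : Finset α, H.IsMinCover C ∧ n = C.card} := by
  refine ⟨H.verts.card, ?_⟩
  rintro n ⟨C, hC, rfl⟩
  exact card_le_card hC.subset_verts

theorem IsMinCover.card_le_alpha0' (hC : H.IsMinCover C) : C.card ≤ H.alpha0' :=
  le_csSup (bddAbove_alpha0' H) ⟨C, hC, rfl⟩

end Covers

theorem BouquetOf.flower_mem (B : H.BouquetOf) {E : Finset α} (hE : E ∈ B.edges) :
    B.flower E ∈ E :=
  (B.flower_spec E hE E hE).mpr rfl

section Families

variable {j : ℕ} {B : Fin j → H.BouquetOf}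

theorem mem_famEdges {E : Finset α} : E ∈ famEdges B ↔ ∃ i, E ∈ (B i).edges := by
  simp [famEdges]

theorem mem_famFlowers {f : α} :
    f ∈ famFlowers B ↔ ∃ i, ∃ E ∈ (B i).edges, (B i).flower E = f := by
  simp [famFlowers, BouquetOf.flowers]

theorem mem_famVerts {v : α} : v ∈ famVerts B ↔ ∃ i, ∃ E ∈ (B i).edges, v ∈ E := by
  simp [famVerts, BouquetOf.verts]

theorem SSD.eq_of_flower_mem (hB : H.SSD B) {p q : Fin j} {E F : Finset α}
    (hE : E ∈ (B p).edges) (hF : F ∈ (B q).edges) (h : (B q).flower F ∈ E) :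
    p = q ∧ E = F := by
  by_cases hpq : p = q
  · subst hpq
    exact ⟨rfl, (((B p).flower_spec F hF E hE).mp h).symm⟩
  · exact absurd h (hB.1 p q hpq E hE _ (mem_image_of_mem _ hF))

theorem SSD.card_famEdges_le_card_famFlowers (hB : H.SSD B) :
    (famEdges B).card ≤ (famFlowers B).card := by
  refine card_le_card_of_forall_subsingleton (fun E f => f ∈ E) (fun E hE => ?_) (fun f hf => ?_)
  · obtain ⟨i, hi⟩ := mem_famEdges.mp hE
    exact ⟨_, mem_famFlowers.mpr ⟨i, E, hi, rfl⟩, (B i).flower_mem hi⟩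
  · obtain ⟨q, F, hF, rfl⟩ := mem_famFlowers.mp hf
    rintro E₁ ⟨hE₁, hF₁⟩ E₂ ⟨hE₂, hF₂⟩
    obtain ⟨p₁, hp₁⟩ := mem_famEdges.mp hE₁
    obtain ⟨p₂, hp₂⟩ := mem_famEdges.mp hE₂
    exact (hB.eq_of_flower_mem hp₁ hF hF₁).2.trans (hB.eq_of_flower_mem hp₂ hF hF₂).2.symm

theorem SSD.isCover_famFlowers_union (hB : H.SSD B) :
    H.IsCover (famFlowers B ∪ (H.verts \ famVerts B)) := by
  intro E hE
  by_cases hsub : E ⊆ famVerts B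
  · obtain ⟨v, hvE, hv⟩ := not_subset.mp (hB.2 E hE)
    have hvF : v ∈ famFlowers B := by
      by_contra hvF
      exact hv (mem_sdiff.mpr ⟨hsub hvE, hvF⟩)
    exact ⟨v, hvE, mem_union_left _ hvF⟩
  · obtain ⟨v, hvE, hv⟩ := not_subset.mp hsub
    exact ⟨v, hvE, mem_union_right _ (mem_sdiff.mpr ⟨mem_verts.mpr ⟨E, hE, hvE⟩, hv⟩)⟩

/-- Each edge `E` of the family meets the minimal subcover in a vertex of `V(𝓑)`, hence in a
flower, and the only flower inside `E` is its own. -/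
theorem SSD.famFlowers_subset_of_isMinCover (hB : H.SSD B) {D : Finset α}
    (hD : H.IsMinCover D) (hDB : D ⊆ famFlowers B ∪ (H.verts \ famVerts B)) :
    famFlowers B ⊆ D := by
  intro f hf
  obtain ⟨i, E, hE, rfl⟩ := mem_famFlowers.mp hf
  obtain ⟨v, hvE, hvD⟩ := hD.1 E ((B i).subset hE)
  have hvV : v ∈ famVerts B := mem_famVerts.mpr ⟨i, E, hE, hvE⟩
  have hvF : v ∈ famFlowers B := by
    rcases mem_union.mp (hDB hvD) with h | h
    · exact h
    · exact absurd hvV (mem_sdiff.mp h).2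
  obtain ⟨q, F, hF, rfl⟩ := mem_famFlowers.mp hvF
  obtain ⟨rfl, rfl⟩ := hB.eq_of_flower_mem hE hF hvE
  exact hvD

theorem SSD.card_famFlowers_le_alpha0' (hB : H.SSD B) : (famFlowers B).card ≤ H.alpha0' := by
  obtain ⟨D, hDB, hD⟩ := hB.isCover_famFlowers_union.exists_isMinCover_subset
  exact (card_le_card (hB.famFlowers_subset_of_isMinCover hD hDB)).trans hD.card_le_alpha0'

theorem SSD.card_famEdges_le_alpha0' (hB : H.SSD B) : (famEdges B).card ≤ H.alpha0' :=
  hB.card_famEdges_le_card_famFlowers.trans hB.card_famFlowers_le_alpha0'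

end Families

theorem dPrime_le_alpha0' (H : SimpleHypergraph α) : H.dPrime ≤ H.alpha0' := by
  refine csSup_le' ?_
  rintro n ⟨j, B, hB, rfl⟩
  exact hB.card_famEdges_le_alpha0'

theorem bddAbove_dPrime (H : SimpleHypergraph α) :
    BddAbove {n : ℕ | ∃ (j : ℕ) (B : Fin j → H.BouquetOf),
      H.SSD B ∧ n = (famEdges B).card} := by
  refine ⟨H.alpha0', ?_⟩
  rintro n ⟨j, B, hB, rfl⟩
  exact hB.card_famEdges_le_alpha0'

def BouquetOf.single {E : Finset α} (hE : E ∈ H.edges) {v : α} (hv : v ∈ E) :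
    H.BouquetOf where
  edges := {E}
  edges_nonempty := singleton_nonempty E
  subset := singleton_subset_iff.mpr hE
  core := ⟨v, fun F hF => mem_singleton.mp hF ▸ hv⟩
  flower _ := v
  flower_spec F hF G hG := by
    rw [mem_singleton] at hF hG
    subst hF hG
    simpa using hv

theorem exists_ssd_of_separated {j : ℕ} {E : Fin j → Finset α} {v : Fin j → α}
    (hE : ∀ i, E i ∈ H.edges) (hv : ∀ i, v i ∈ E i) (hsep : ∀ i k, v k ∈ E i → k = i)
    (hcov : H.IsCover (univ.image v)) :
    ∃ B : Fin j → H.BouquetOf,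
      H.SSD B ∧ famFlowers B = univ.image v ∧ (famEdges B).card = j := by
  set B : Fin j → H.BouquetOf := fun i => .single (hE i) (hv i)
  have hflowers : famFlowers B = univ.image v := by
    ext f
    simp [mem_famFlowers, B, BouquetOf.single]
  have hedges : famEdges B = univ.image E := by
    ext F
    simp [mem_famEdges, B, BouquetOf.single, eq_comm]
  have hinj : Function.Injective E := fun i k hik => (hsep i k (hik ▸ hv k)).symm
  refine ⟨B, ⟨?_, hflowers ▸ hcov.indep_sdiff _⟩, hflowers, ?_⟩
  · intro p q hpq F hF f hf hfF
    simp only [B, BouquetOf.single, BouquetOf.flowers, mem_singleton, image_singleton] at hF hf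
    subst hF hf
    exact hpq (hsep p q hfF).symm
  · rw [hedges, card_image_of_injective _ hinj, card_univ, Fintype.card_fin]

theorem IsMinCover.exists_ssd_famFlowers_eq {C : Finset α} (hC : H.IsMinCover C) :
    ∃ (j : ℕ) (B : Fin j → H.BouquetOf),
      H.SSD B ∧ famFlowers B = C ∧ (famEdges B).card = C.card := by
  choose E hE hEC using fun v : C => hC.exists_inter_eq_singleton v.2
  set e : Fin C.card ≃ C := C.equivFin.symm
  have hC_eq : univ.image (fun i => (e i : α)) = C := by
    ext x
    refine ⟨fun hx => ?_, fun hx => mem_image.mpr ⟨e.symm ⟨x, hx⟩, mem_univ _, by simp⟩⟩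
    obtain ⟨i, -, rfl⟩ := mem_image.mp hx
    exact (e i).2
  have hmem : ∀ {v : C} {w : α}, w ∈ E v → w ∈ C → w = v := fun hw hwC =>
    mem_singleton.mp (hEC _ ▸ mem_inter.mpr ⟨hw, hwC⟩)
  have hvE : ∀ v : C, (v : α) ∈ E v := fun v =>
    (mem_inter.mp (hEC v ▸ mem_singleton_self _)).1
  obtain ⟨B, hB, hflowers, hedges⟩ := exists_ssd_of_separated (fun i => hE (e i))
    (fun i => hvE (e i)) (fun i k hki => e.injective (Subtype.ext (hmem hki (e k).2)))
    (hC_eq.symm ▸ hC.1)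
  exact ⟨C.card, B, hB, hflowers.trans hC_eq, hedges⟩

end SimpleHypergraph

open SimpleHypergraph in
/-- a minimal vertex cover of maximum cardinality is the flower
set of a semi-strongly disjoint set of bouquets realizing `d'_H`. -/
theorem stmt10 {α : Type*} [DecidableEq α] (H : SimpleHypergraph α)
    (C : Finset α) (hC : H.IsMinCover C) (hmax : C.card = H.alpha0') :
    ∃ (j : ℕ) (B : Fin j → H.BouquetOf),
      H.SSD B ∧ famFlowers B = C ∧ (famFlowers B).card = H.dPrime := by
  obtain ⟨j, B, hB, hflowers, hedges⟩ := hC.exists_ssd_famFlowers_eq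
  have hC_le : C.card ≤ H.dPrime := le_csSup (bddAbove_dPrime H) ⟨j, B, hB, hedges.symm⟩
  have hC_ge : H.dPrime ≤ C.card := hmax ▸ dPrime_le_alpha0' H
  exact ⟨j, B, hB, hflowers, by rw [hflowers]; exact le_antisymm hC_le hC_ge⟩
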